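/- For every integer n ≥ 2 and every integer j with 0 ≤ j ≤ n−1, the sum over k = 1, …, n−1 of cos(2πkj/n)/sin²(kπ/n) equals (n² − 6nj + 6j² − 1)/3. -/

import Mathlib

open Real Finset


lemma cos_sum_eq_zero (n a : ℕ) (hn : 0 < n) (ha : ¬ n ∣ a) :
    ∑ b ∈ Finset.range n, Real.cos (2 * Real.pi * a * b / n) = 0 := by
  have hn0 : (n:ℝ) ≠ 0 := Nat.cast_ne_zero.mpr hn.ne'
  have hn0' : (n:ℂ) ≠ 0 := Nat.cast_ne_zero.mpr hn.ne'
  set ζ : ℂ := Complex.exp (2 * (π:ℂ) * Complex.I * a / n) with hζ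
  have hζpow : ∀ b : ℕ, ζ ^ b = Complex.exp (((2 * π * a * b / n : ℝ) : ℂ) * Complex.I) := by
    intro b
    rw [← Complex.exp_nat_mul]
    congr 1
    push_cast
    field_simp
  have hζn : ζ ^ n = 1 := by
    rw [← Complex.exp_nat_mul]
    have h1 : (n:ℂ) * (2 * (π:ℂ) * Complex.I * a / n) = a * (2 * π * Complex.I) := by
      field_simp
    rw [h1, Complex.exp_nat_mul_two_pi_mul_I]
  have hζ1 : ζ ≠ 1 := by
    intro h
    rw [Complex.exp_eq_one_iff] at h
    obtain ⟨m, hm⟩ := h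
    apply ha
    have h2πI : (2 * (π:ℂ) * Complex.I : ℂ) ≠ 0 := by
      simp [Complex.I_ne_zero, Complex.ofReal_ne_zero, Real.pi_ne_zero]
    have h2 : (a:ℂ) = (m:ℂ) * n := by
      field_simp at hm
      apply mul_left_cancel₀ h2πI
      linear_combination (2 * (π:ℂ) * Complex.I) * hm
    have h3 : (a:ℤ) = m * n := by exact_mod_cast h2
    exact Int.natCast_dvd_natCast.mp ⟨m, by rw [h3]; ring⟩
  have hsum : ∑ b ∈ Finset.range n, ζ ^ b = 0 := by
    have hg := geom_sum_mul ζ n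
    rw [hζn, sub_self] at hg
    rcases mul_eq_zero.mp hg with h | h
    · exact h
    · exact absurd (sub_eq_zero.mp h) hζ1
  calc ∑ b ∈ Finset.range n, Real.cos (2 * π * a * b / n)
      = (∑ b ∈ Finset.range n, ζ ^ b).re := by
        rw [Complex.re_sum]
        refine Finset.sum_congr rfl fun b _ => ?_
        rw [hζpow b, Complex.exp_ofReal_mul_I_re]
    _ = 0 := by rw [hsum]; rfl

lemma cos_sum_Ico (n a : ℕ) (hn : 0 < n) (ha : ¬ n ∣ a) :
    ∑ b ∈ Finset.Ico 1 n, Real.cos (2 * Real.pi * a * b / n) = -1 := by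
  have h := cos_sum_eq_zero n a hn ha
  rw [Finset.range_eq_Ico, Finset.sum_eq_sum_Ico_succ_bot hn] at h
  simp at h
  linarith

lemma sin_pos_of_mem (n k : ℕ) (hk : k ∈ Finset.Ico 1 n) : 0 < Real.sin (k * Real.pi / n) := by
  obtain ⟨hk1, hk2⟩ := Finset.mem_Ico.mp hk
  have hn : 0 < n := lt_of_le_of_lt (Nat.zero_le _) hk2
  apply Real.sin_pos_of_pos_of_lt_pi
  · positivity
  · rw [div_lt_iff₀ (by exact_mod_cast hn)]
    have : (k:ℝ) < n := by exact_mod_cast hk2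
    nlinarith [Real.pi_pos]

lemma sum_id_real (n : ℕ) : ∑ j ∈ Finset.range n, (j:ℝ) = n * ((n:ℝ) - 1) / 2 := by
  induction n with
  | zero => simp
  | succ m ih => rw [Finset.sum_range_succ, ih]; push_cast; ring

lemma sum_sq_real (n : ℕ) : ∑ j ∈ Finset.range n, (j:ℝ)^2 = n * ((n:ℝ) - 1) * (2*n - 1) / 6 := by
  induction n with
  | zero => simp
  | succ m ih => rw [Finset.sum_range_succ, ih]; push_cast; ring

noncomputable def F (n j : ℕ) : ℝ :=
  ∑ k ∈ Finset.Ico 1 n, Real.cos (2 * Real.pi * k * j / n) / (Real.sin (k * Real.pi / n)) ^ 2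

lemma F_rec (n j : ℕ) (hn : 2 ≤ n) (hj : ¬ n ∣ (j+1)) :
    F n (j+2) = 2 * F n (j+1) - F n j + 4 := by
  have hn0 : (n:ℝ) ≠ 0 := Nat.cast_ne_zero.mpr (by omega)
  have key : ∀ k ∈ Finset.Ico 1 n,
      Real.cos (2 * Real.pi * k * (j+2) / n) / (Real.sin (k * Real.pi / n)) ^ 2
      = 2 * (Real.cos (2 * Real.pi * k * (j+1) / n) / (Real.sin (k * Real.pi / n)) ^ 2)
        - Real.cos (2 * Real.pi * k * j / n) / (Real.sin (k * Real.pi / n)) ^ 2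
        - 4 * Real.cos (2 * Real.pi * k * (j+1) / n) := by
    intro k hk
    have hs : Real.sin (k * Real.pi / n) ≠ 0 := (sin_pos_of_mem n k hk).ne'
    set θ : ℝ := 2 * Real.pi * k * (j+1) / n with hθ
    set φ : ℝ := 2 * Real.pi * k / n with hφ
    have hA : 2 * Real.pi * (k:ℝ) * ((j:ℝ)+2) / n = θ + φ := by
      rw [hθ, hφ]; field_simp; ring
    have hB : 2 * Real.pi * (k:ℝ) * (j:ℝ) / n = θ - φ := by
      rw [hθ, hφ]; field_simp; ring
    have hφ2 : φ = 2 * ((k:ℝ) * Real.pi / n) := by rw [hφ]; ring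
    have hcosφ : Real.cos φ = 1 - 2 * Real.sin ((k:ℝ) * Real.pi / n) ^ 2 := by
      rw [hφ2, Real.cos_two_mul']
      nlinarith [Real.sin_sq_add_cos_sq ((k:ℝ) * Real.pi / n)]
    have hsum : Real.cos (θ + φ) + Real.cos (θ - φ) = 2 * Real.cos θ * Real.cos φ := by
      rw [Real.cos_add, Real.cos_sub]; ring
    push_cast
    rw [hA, hB]
    field_simp
    linear_combination hsum + 2 * Real.cos θ * hcosφ
  unfold F
  push_cast
  rw [Finset.sum_congr rfl key]
  rw [Finset.sum_sub_distrib, Finset.sum_sub_distrib, ← Finset.mul_sum, ← Finset.mul_sum]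
  have hcs : ∑ k ∈ Finset.Ico 1 n, Real.cos (2 * Real.pi * (k:ℝ) * ((j:ℝ)+1) / n) = -1 := by
    have := cos_sum_Ico n (j+1) (by omega) hj
    rw [← this]
    refine Finset.sum_congr rfl fun b hb => ?_
    push_cast
    ring_nf
  rw [hcs]
  push_cast
  ring


-- closed form: for j ≤ n, F n j = F n 0 + (F n 1 - F n 0) * j + 2 j^2 - 2 j
lemma F_closed (n : ℕ) (hn : 2 ≤ n) : ∀ j, j ≤ n - 1 →
    F n j = F n 0 + (F n 1 - F n 0) * j + 2 * (j:ℝ)^2 - 2 * j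
    ∧ F n (j+1) = F n 0 + (F n 1 - F n 0) * (j+1) + 2 * ((j:ℝ)+1)^2 - 2 * ((j:ℝ)+1) := by
  intro j
  induction j with
  | zero => intro _; constructor <;> push_cast <;> ring_nf
  | succ m ih =>
    intro hm
    obtain ⟨h1, h2⟩ := ih (by omega)
    refine ⟨by push_cast; push_cast at h2; linarith, ?_⟩
    have hdvd : ¬ n ∣ (m+1) := fun h => by have := Nat.le_of_dvd (by omega) h; omega
    have := F_rec n m hn hdvd
    push_cast
    push_cast at h1 h2 this
    linarith [this]

lemma F_zero (n : ℕ) (hn : 2 ≤ n) : F n 0 = ((n:ℝ)^2 - 1) / 3 := by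
  have hn0 : (n:ℝ) ≠ 0 := Nat.cast_ne_zero.mpr (by omega)
  set f0 := F n 0 with hf0
  set d := F n 1 - F n 0 with hd
  -- E1 : F n n = F n 0
  have hFn : F n n = F n 0 := by
    unfold F
    refine Finset.sum_congr rfl fun k hk => ?_
    have h1 : 2 * Real.pi * (k:ℝ) * (n:ℝ) / n = k * (2 * Real.pi) := by field_simp
    have h2 : 2 * Real.pi * (k:ℝ) * ((0:ℕ):ℝ) / n = 0 := by push_cast; ring
    rw [h1, h2, Real.cos_nat_mul_two_pi, Real.cos_zero]
  -- F n n via closed form at j = n-1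
  have hcf := (F_closed n hn (n-1) le_rfl).2
  have hn1 : n - 1 + 1 = n := by omega
  rw [hn1] at hcf
  have hcast : ((n-1 : ℕ) : ℝ) = (n:ℝ) - 1 := by
    have : (1:ℕ) ≤ n := by omega
    push_cast [this]
    ring
  rw [hcast] at hcf
  -- so d * n + 2n^2 - 2n = 0, hence d = 2 - 2n
  have hdval : d = 2 - 2 * n := by
    apply mul_right_cancel₀ hn0
    have : F n n = f0 + d * ((n:ℝ) - 1 + 1) + 2*((n:ℝ)-1+1)^2 - 2*((n:ℝ)-1+1) := hcf
    rw [hFn] at this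
    nlinarith [this]
  -- E2 : sum over j in range n of F n j = 0
  have hE2 : ∑ j ∈ Finset.range n, F n j = 0 := by
    unfold F
    rw [Finset.sum_comm]
    refine Finset.sum_eq_zero fun k hk => ?_
    obtain ⟨hk1, hk2⟩ := Finset.mem_Ico.mp hk
    have hkd : ¬ n ∣ k := fun h => by have := Nat.le_of_dvd (by omega) h; omega
    rw [← Finset.sum_div]
    rw [cos_sum_eq_zero n k (by omega) hkd]
    simp
  -- sum of closed form
  have hsum : ∑ j ∈ Finset.range n, F n j
      = n * f0 + d * (n * ((n:ℝ)-1)/2) + 2 * (n * ((n:ℝ)-1) * (2*(n:ℝ)-1)/6) - 2 * (n*((n:ℝ)-1)/2) := by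
    have heq : ∀ j ∈ Finset.range n, F n j = f0 + d * j + 2*(j:ℝ)^2 - 2*j := by
      intro j hj
      have hj' : j ≤ n - 1 := by have := Finset.mem_range.mp hj; omega
      exact (F_closed n hn j hj').1
    rw [Finset.sum_congr rfl heq]
    simp only [Finset.sum_sub_distrib, Finset.sum_add_distrib, ← Finset.mul_sum,
      Finset.sum_const, Finset.card_range, nsmul_eq_mul]
    rw [sum_id_real, sum_sq_real]
  rw [hE2] at hsum
  rw [hdval] at hsum
  apply mul_left_cancel₀ hn0
  have hgoal : (n:ℝ) * f0 = n * (((n:ℝ)^2 - 1)/3) := by nlinarith [hsum]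
  exact hgoal

theorem sum_cos_div_sin_sq (n j : ℕ) (hn : 2 ≤ n) (hj : j ≤ n - 1) :
    ∑ k ∈ Finset.Ico 1 n,
        Real.cos (2 * Real.pi * k * j / n) / (Real.sin (k * Real.pi / n)) ^ 2
      = ((n : ℝ) ^ 2 - 6 * n * j + 6 * (j : ℝ) ^ 2 - 1) / 3 := by
  have h1 := (F_closed n hn j hj).1
  have h0 := F_zero n hn
  -- need d value too
  have hn0 : (n:ℝ) ≠ 0 := Nat.cast_ne_zero.mpr (by omega)
  have hFn : F n n = F n 0 := by
    unfold F
    refine Finset.sum_congr rfl fun k hk => ?_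
    have ha : 2 * Real.pi * (k:ℝ) * (n:ℝ) / n = k * (2 * Real.pi) := by field_simp
    have hb : 2 * Real.pi * (k:ℝ) * ((0:ℕ):ℝ) / n = 0 := by push_cast; ring
    rw [ha, hb, Real.cos_nat_mul_two_pi, Real.cos_zero]
  have hcf := (F_closed n hn (n-1) le_rfl).2
  have hn1 : n - 1 + 1 = n := by omega
  rw [hn1] at hcf
  have hcast : ((n-1 : ℕ) : ℝ) = (n:ℝ) - 1 := by
    have h1n : (1:ℕ) ≤ n := by omega
    push_cast [h1n]; ring
  rw [hcast] at hcf
  have hdval : F n 1 - F n 0 = 2 - 2 * n := by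
    apply mul_right_cancel₀ hn0
    rw [hFn] at hcf
    nlinarith [hcf]
  show F n j = _
  rw [h1, hdval, h0]
  ring
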